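/- arXiv:2403.12626 — 3 statements merged into one kernel-verified Lean document; each statement's English description precedes it below -/
import Mathlib

section
/- (The associated surface r⁺ is pseudospherical with asymptotic x-direction.) In the concordant Chebyshev setting with potential m, set r⁺ := r + m/κ. Then on U: r⁺_xx·n = 0, r⁺_xy·n = h₁₂ sin ω, and r⁺_yy·n = 2 h₂₂ sin ω. Consequently, at every point of U where h₁₂ ≠ 0, the Gauss curvature of r⁺ equals −κ²: ((r⁺_xx·n)(r⁺_yy·n) − (r⁺_xy·n)²) / ((r⁺_x·r⁺_x)(r⁺_y·r⁺_y) − (r⁺_x·r⁺_y)²) = −κ², and the direction ∂/∂x is asymptotic for r⁺. -/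
open scoped Matrix

noncomputable def Dx {E : Type*} [NormedAddCommGroup E] [NormedSpace ℝ E]
    (f : ℝ × ℝ → E) (p : ℝ × ℝ) : E := fderiv ℝ f p (1, 0)

noncomputable def Dy {E : Type*} [NormedAddCommGroup E] [NormedSpace ℝ E]
    (f : ℝ × ℝ → E) (p : ℝ × ℝ) : E := fderiv ℝ f p (0, 1)

/-- The unit normal `n = (r_x × r_y)/sin ω` of a Chebyshev parameterisation. -/
noncomputable def nvec (r : ℝ × ℝ → Fin 3 → ℝ) (ω : ℝ × ℝ → ℝ) (p : ℝ × ℝ) : Fin 3 → ℝ :=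
  (Real.sin (ω p))⁻¹ • (Dx r p ⨯₃ Dy r p)

/-- `h₁₁ = (r_xx·n)/sin ω`. -/
noncomputable def h11 (r : ℝ × ℝ → Fin 3 → ℝ) (ω : ℝ × ℝ → ℝ) (p : ℝ × ℝ) : ℝ :=
  (Dx (Dx r) p ⬝ᵥ nvec r ω p) / Real.sin (ω p)

/-- `h₁₂ = (r_xy·n)/sin ω`. -/
noncomputable def h12 (r : ℝ × ℝ → Fin 3 → ℝ) (ω : ℝ × ℝ → ℝ) (p : ℝ × ℝ) : ℝ :=
  (Dy (Dx r) p ⬝ᵥ nvec r ω p) / Real.sin (ω p)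

/-- `h₂₂ = (r_yy·n)/sin ω`. -/
noncomputable def h22 (r : ℝ × ℝ → Fin 3 → ℝ) (ω : ℝ × ℝ → ℝ) (p : ℝ × ℝ) : ℝ :=
  (Dy (Dy r) p ⬝ᵥ nvec r ω p) / Real.sin (ω p)

/-- The associated surface `r⁺ = r + m/κ`. -/
noncomputable def rplus (r m : ℝ × ℝ → Fin 3 → ℝ) (κ : ℝ) (p : ℝ × ℝ) : Fin 3 → ℝ :=
  r p + κ⁻¹ • m p

/-- The associated surface `r⁻ = r − m/κ`. -/
noncomputable def rminus (r m : ℝ × ℝ → Fin 3 → ℝ) (κ : ℝ) (p : ℝ × ℝ) : Fin 3 → ℝ :=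
  r p - κ⁻¹ • m p

open Matrix

section Aux
variable {U : Set (ℝ × ℝ)}

lemma diffAt_of_cd {E : Type*} [NormedAddCommGroup E] [NormedSpace ℝ E] (hU : IsOpen U)
    {f : ℝ × ℝ → E} (hf : ContDiffOn ℝ (⊤ : ℕ∞) f U) {p : ℝ × ℝ} (hp : p ∈ U) :
    DifferentiableAt ℝ f p :=
  (hf.differentiableOn (by simp)).differentiableAt (hU.mem_nhds hp)

lemma contDiffOn_Dx {E : Type*} [NormedAddCommGroup E] [NormedSpace ℝ E]
    (hU : IsOpen U) {f : ℝ × ℝ → E} (hf : ContDiffOn ℝ (⊤ : ℕ∞) f U) :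
    ContDiffOn ℝ (⊤ : ℕ∞) (Dx f) U :=
  (hf.fderiv_of_isOpen hU (by simp)).clm_apply contDiffOn_const

lemma contDiffOn_Dy {E : Type*} [NormedAddCommGroup E] [NormedSpace ℝ E]
    (hU : IsOpen U) {f : ℝ × ℝ → E} (hf : ContDiffOn ℝ (⊤ : ℕ∞) f U) :
    ContDiffOn ℝ (⊤ : ℕ∞) (Dy f) U :=
  (hf.fderiv_of_isOpen hU (by simp)).clm_apply contDiffOn_const

lemma contDiffOn_proj {f : ℝ × ℝ → Fin 3 → ℝ} (hf : ContDiffOn ℝ (⊤ : ℕ∞) f U) (i : Fin 3) :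
    ContDiffOn ℝ (⊤ : ℕ∞) (fun q => f q i) U :=
  (ContinuousLinearMap.proj (R := ℝ) (φ := fun _ : Fin 3 => ℝ) i).contDiff.comp_contDiffOn hf

lemma contDiffOn_dot {a b : ℝ × ℝ → Fin 3 → ℝ} (ha : ContDiffOn ℝ (⊤ : ℕ∞) a U)
    (hb : ContDiffOn ℝ (⊤ : ℕ∞) b U) : ContDiffOn ℝ (⊤ : ℕ∞) (fun q => a q ⬝ᵥ b q) U := by
  have : (fun q => a q ⬝ᵥ b q) = fun q => ∑ i : Fin 3, a q i * b q i := rfl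
  rw [this]
  exact ContDiffOn.sum fun i _ => (contDiffOn_proj ha i).mul (contDiffOn_proj hb i)

lemma contDiffOn_cross {a b : ℝ × ℝ → Fin 3 → ℝ} (ha : ContDiffOn ℝ (⊤ : ℕ∞) a U)
    (hb : ContDiffOn ℝ (⊤ : ℕ∞) b U) : ContDiffOn ℝ (⊤ : ℕ∞) (fun q => a q ⨯₃ b q) U := by
  rw [contDiffOn_pi]
  intro i
  have h : ∀ (i j : Fin 3), ContDiffOn ℝ (⊤ : ℕ∞) (fun q => a q i * b q j - a q j * b q i) U :=
    fun i j => ((contDiffOn_proj ha i).mul (contDiffOn_proj hb j)).sub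
      ((contDiffOn_proj ha j).mul (contDiffOn_proj hb i))
  fin_cases i <;> simpa [cross_apply] using h _ _

lemma fderiv_combo_dot (hU : IsOpen U) {p : ℝ × ℝ} (hp : p ∈ U)
    {g u v : ℝ × ℝ → Fin 3 → ℝ} {c d : ℝ × ℝ → ℝ} {n0 : Fin 3 → ℝ} (w : ℝ × ℝ)
    (hc : DifferentiableAt ℝ c p) (hd : DifferentiableAt ℝ d p)
    (hu : DifferentiableAt ℝ u p) (hv : DifferentiableAt ℝ v p)
    (hg : ∀ q ∈ U, g q = c q • u q + d q • v q)
    (hnu : u p ⬝ᵥ n0 = 0) (hnv : v p ⬝ᵥ n0 = 0) :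
    fderiv ℝ g p w ⬝ᵥ n0 =
      c p * (fderiv ℝ u p w ⬝ᵥ n0) + d p * (fderiv ℝ v p w ⬝ᵥ n0) := by
  have hgE : g =ᶠ[nhds p] fun q => c q • u q + d q • v q :=
    Filter.eventuallyEq_of_mem (hU.mem_nhds hp) hg
  have H : HasFDerivAt (fun q => c q • u q + d q • v q)
      ((c p • fderiv ℝ u p + (fderiv ℝ c p).smulRight (u p)) +
       (d p • fderiv ℝ v p + (fderiv ℝ d p).smulRight (v p))) p :=
    (hc.hasFDerivAt.smul hu.hasFDerivAt).add (hd.hasFDerivAt.smul hv.hasFDerivAt)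
  rw [hgE.fderiv_eq, H.fderiv]
  simp [ContinuousLinearMap.add_apply, ContinuousLinearMap.coe_smul', Pi.smul_apply,
    ContinuousLinearMap.smulRight_apply, add_dotProduct, smul_dotProduct,
    hnu, hnv, smul_eq_mul]

lemma symm_Dxy (hU : IsOpen U) {r : ℝ × ℝ → Fin 3 → ℝ}
    (hr : ContDiffOn ℝ (⊤ : ℕ∞) r U) {p : ℝ × ℝ} (hp : p ∈ U) :
    Dx (Dy r) p = Dy (Dx r) p := by
  have h1 : ∀ᶠ q in nhds p, HasFDerivAt r (fderiv ℝ r q) q := by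
    filter_upwards [hU.mem_nhds hp] with q hq
    exact (diffAt_of_cd hU hr hq).hasFDerivAt
  have h2 : HasFDerivAt (fun q => fderiv ℝ r q) (fderiv ℝ (fderiv ℝ r) p) p :=
    (diffAt_of_cd hU (hr.fderiv_of_isOpen hU (by simp)) hp).hasFDerivAt
  have hs := second_derivative_symmetric_of_eventually h1 h2 ((1:ℝ), (0:ℝ)) ((0:ℝ), (1:ℝ))
  have e1 : fderiv ℝ (Dy r) p =
      (ContinuousLinearMap.apply ℝ (Fin 3 → ℝ) ((0:ℝ), (1:ℝ))).comp
        (fderiv ℝ (fderiv ℝ r) p) :=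
    ((ContinuousLinearMap.apply ℝ (Fin 3 → ℝ) ((0:ℝ), (1:ℝ))).hasFDerivAt.comp p h2).fderiv
  have e2 : fderiv ℝ (Dx r) p =
      (ContinuousLinearMap.apply ℝ (Fin 3 → ℝ) ((1:ℝ), (0:ℝ))).comp
        (fderiv ℝ (fderiv ℝ r) p) :=
    ((ContinuousLinearMap.apply ℝ (Fin 3 → ℝ) ((1:ℝ), (0:ℝ))).hasFDerivAt.comp p h2).fderiv
  show fderiv ℝ (Dy r) p (1, 0) = fderiv ℝ (Dx r) p (0, 1)
  rw [e1, e2]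
  simpa using hs

end Aux

/-- **The associated surface `r⁺` is pseudospherical with asymptotic `x`-direction.**
`r⁺_xx·n = 0`, `r⁺_xy·n = h₁₂ sin ω`, `r⁺_yy·n = 2h₂₂ sin ω`; hence wherever `h₁₂ ≠ 0`
the Gauss curvature of `r⁺` equals `−κ²` and `∂/∂x` is asymptotic for `r⁺`. -/
theorem associated_surface_plus_pseudospherical
    (U : Set (ℝ × ℝ)) (hU : IsOpen U) (hUconn : IsConnected U)
    (r : ℝ × ℝ → Fin 3 → ℝ) (hr : ContDiffOn ℝ (⊤ : ℕ∞) r U)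
    (ω : ℝ × ℝ → ℝ) (hω : ContDiffOn ℝ (⊤ : ℕ∞) ω U)
    (hω0 : ∀ p ∈ U, 0 < ω p) (hωπ : ∀ p ∈ U, ω p < Real.pi)
    (hxx : ∀ p ∈ U, Dx r p ⬝ᵥ Dx r p = 1)
    (hyy : ∀ p ∈ U, Dy r p ⬝ᵥ Dy r p = 1)
    (hxy : ∀ p ∈ U, Dx r p ⬝ᵥ Dy r p = Real.cos (ω p))
    (κ : ℝ) (hκ : κ ≠ 0)
    (hconc : ∀ p ∈ U,
      h11 r ω p * h22 r ω p - (h12 r ω p) ^ 2 + κ * h12 r ω p = 0)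
    (m : ℝ × ℝ → Fin 3 → ℝ) (hm : ContDiffOn ℝ (⊤ : ℕ∞) m U)
    (hmx : ∀ p ∈ U, Dx m p = (h12 r ω p - κ) • Dx r p - h11 r ω p • Dy r p)
    (hmy : ∀ p ∈ U, Dy m p = h22 r ω p • Dx r p + (κ - h12 r ω p) • Dy r p)
    :
    (∀ p ∈ U,
        Dx (Dx (rplus r m κ)) p ⬝ᵥ nvec r ω p = 0
        ∧ Dy (Dx (rplus r m κ)) p ⬝ᵥ nvec r ω p = h12 r ω p * Real.sin (ω p)
        ∧ Dy (Dy (rplus r m κ)) p ⬝ᵥ nvec r ω p = 2 * h22 r ω p * Real.sin (ω p))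
    ∧ (∀ p ∈ U, h12 r ω p ≠ 0 →
        ((Dx (Dx (rplus r m κ)) p ⬝ᵥ nvec r ω p)
            * (Dy (Dy (rplus r m κ)) p ⬝ᵥ nvec r ω p)
          - (Dy (Dx (rplus r m κ)) p ⬝ᵥ nvec r ω p) ^ 2)
        / ((Dx (rplus r m κ) p ⬝ᵥ Dx (rplus r m κ) p)
            * (Dy (rplus r m κ) p ⬝ᵥ Dy (rplus r m κ) p)
          - (Dx (rplus r m κ) p ⬝ᵥ Dy (rplus r m κ) p) ^ 2)
        = -κ ^ 2) := by
  -- basic nonvanishing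
  have hsin : ∀ p ∈ U, Real.sin (ω p) ≠ 0 := fun p hp =>
    (Real.sin_pos_of_pos_of_lt_pi (hω0 p hp) (hωπ p hp)).ne'
  -- smoothness of everything in sight
  have hrx : ContDiffOn ℝ (⊤ : ℕ∞) (Dx r) U := contDiffOn_Dx hU hr
  have hry : ContDiffOn ℝ (⊤ : ℕ∞) (Dy r) U := contDiffOn_Dy hU hr
  have hsinC : ContDiffOn ℝ (⊤ : ℕ∞) (fun q => Real.sin (ω q)) U :=
    Real.contDiff_sin.comp_contDiffOn hω
  have hnC : ContDiffOn ℝ (⊤ : ℕ∞) (nvec r ω) U :=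
    (hsinC.inv hsin).smul (contDiffOn_cross hrx hry)
  have h11C : ContDiffOn ℝ (⊤ : ℕ∞) (h11 r ω) U :=
    (contDiffOn_dot (contDiffOn_Dx hU hrx) hnC).div hsinC hsin
  have h12C : ContDiffOn ℝ (⊤ : ℕ∞) (h12 r ω) U :=
    (contDiffOn_dot (contDiffOn_Dy hU hrx) hnC).div hsinC hsin
  have h22C : ContDiffOn ℝ (⊤ : ℕ∞) (h22 r ω) U :=
    (contDiffOn_dot (contDiffOn_Dy hU hry) hnC).div hsinC hsin
  -- tangent vectors are orthogonal to the normal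
  have hnx : ∀ p ∈ U, Dx r p ⬝ᵥ nvec r ω p = 0 := by
    intro p hp
    rw [nvec, dotProduct_smul, dot_self_cross, smul_zero]
  have hny : ∀ p ∈ U, Dy r p ⬝ᵥ nvec r ω p = 0 := by
    intro p hp
    rw [nvec, dotProduct_smul, dot_cross_self, smul_zero]
  -- second fundamental coefficients, in fderiv form
  have e11 : ∀ p ∈ U, fderiv ℝ (Dx r) p (1, 0) ⬝ᵥ nvec r ω p
      = h11 r ω p * Real.sin (ω p) := fun p hp =>
    (div_mul_cancel₀ _ (hsin p hp)).symm
  have e12 : ∀ p ∈ U, fderiv ℝ (Dx r) p (0, 1) ⬝ᵥ nvec r ω p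
      = h12 r ω p * Real.sin (ω p) := fun p hp =>
    (div_mul_cancel₀ _ (hsin p hp)).symm
  have e22 : ∀ p ∈ U, fderiv ℝ (Dy r) p (0, 1) ⬝ᵥ nvec r ω p
      = h22 r ω p * Real.sin (ω p) := fun p hp =>
    (div_mul_cancel₀ _ (hsin p hp)).symm
  have e21 : ∀ p ∈ U, fderiv ℝ (Dy r) p (1, 0) ⬝ᵥ nvec r ω p
      = h12 r ω p * Real.sin (ω p) := by
    intro p hp
    have : fderiv ℝ (Dy r) p (1, 0) = Dx (Dy r) p := rfl
    rw [this, symm_Dxy hU hr hp]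
    exact e12 p hp
  -- first derivatives of rplus
  have hR : ∀ q ∈ U, ∀ w : ℝ × ℝ,
      fderiv ℝ (rplus r m κ) q w = fderiv ℝ r q w + κ⁻¹ • fderiv ℝ m q w := by
    intro q hq w
    have H : HasFDerivAt (rplus r m κ) (fderiv ℝ r q + κ⁻¹ • fderiv ℝ m q) q :=
      (diffAt_of_cd hU hr hq).hasFDerivAt.add
        ((diffAt_of_cd hU hm hq).hasFDerivAt.const_smul κ⁻¹)
    rw [H.fderiv]; simp
  have hRx : ∀ q ∈ U, Dx (rplus r m κ) q = Dx r q + κ⁻¹ • Dx m q :=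
    fun q hq => hR q hq (1, 0)
  have hRy : ∀ q ∈ U, Dy (rplus r m κ) q = Dy r q + κ⁻¹ • Dy m q :=
    fun q hq => hR q hq (0, 1)
  -- hmx / hmy rewritten as plus-combinations
  have hmx' : ∀ q ∈ U, Dx m q = (fun q => h12 r ω q - κ) q • Dx r q
      + (fun q => -(h11 r ω q)) q • Dy r q := by
    intro q hq; rw [hmx q hq]; simp [sub_eq_add_neg]
  have hmy' : ∀ q ∈ U, Dy m q = (h22 r ω) q • Dx r q
      + (fun q => κ - h12 r ω q) q • Dy r q := fun q hq => hmy q hq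
  -- differentiability of Dx m, Dy m
  have hDxm_diff : ∀ p ∈ U, DifferentiableAt ℝ (Dx m) p := by
    intro p hp
    have hE : Dx m =ᶠ[nhds p]
        fun q => (h12 r ω q - κ) • Dx r q - h11 r ω q • Dy r q :=
      Filter.eventuallyEq_of_mem (hU.mem_nhds hp) hmx
    rw [hE.differentiableAt_iff]
    exact (((diffAt_of_cd hU h12C hp).sub_const κ).smul (diffAt_of_cd hU hrx hp)).sub
      ((diffAt_of_cd hU h11C hp).smul (diffAt_of_cd hU hry hp))
  have hDym_diff : ∀ p ∈ U, DifferentiableAt ℝ (Dy m) p := by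
    intro p hp
    have hE : Dy m =ᶠ[nhds p]
        fun q => h22 r ω q • Dx r q + (κ - h12 r ω q) • Dy r q :=
      Filter.eventuallyEq_of_mem (hU.mem_nhds hp) hmy
    rw [hE.differentiableAt_iff]
    exact ((diffAt_of_cd hU h22C hp).smul (diffAt_of_cd hU hrx hp)).add
      (((differentiableAt_const κ).sub (diffAt_of_cd hU h12C hp)).smul
        (diffAt_of_cd hU hry hp))
  -- second derivatives of m dotted with the normal
  have Mx : ∀ p ∈ U, ∀ w : ℝ × ℝ, fderiv ℝ (Dx m) p w ⬝ᵥ nvec r ω p =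
      (h12 r ω p - κ) * (fderiv ℝ (Dx r) p w ⬝ᵥ nvec r ω p)
      + (-(h11 r ω p)) * (fderiv ℝ (Dy r) p w ⬝ᵥ nvec r ω p) := by
    intro p hp w
    exact fderiv_combo_dot hU hp w ((diffAt_of_cd hU h12C hp).sub_const κ)
      (diffAt_of_cd hU h11C hp).neg (diffAt_of_cd hU hrx hp) (diffAt_of_cd hU hry hp)
      hmx' (hnx p hp) (hny p hp)
  have My : ∀ p ∈ U, ∀ w : ℝ × ℝ, fderiv ℝ (Dy m) p w ⬝ᵥ nvec r ω p =
      h22 r ω p * (fderiv ℝ (Dx r) p w ⬝ᵥ nvec r ω p)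
      + (κ - h12 r ω p) * (fderiv ℝ (Dy r) p w ⬝ᵥ nvec r ω p) := by
    intro p hp w
    exact fderiv_combo_dot hU hp w (diffAt_of_cd hU h22C hp)
      ((differentiableAt_const κ).sub (diffAt_of_cd hU h12C hp))
      (diffAt_of_cd hU hrx hp) (diffAt_of_cd hU hry hp)
      hmy' (hnx p hp) (hny p hp)
  -- second derivatives of rplus
  have hD2x : ∀ p ∈ U, ∀ w : ℝ × ℝ,
      fderiv ℝ (Dx (rplus r m κ)) p w
        = fderiv ℝ (Dx r) p w + κ⁻¹ • fderiv ℝ (Dx m) p w := by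
    intro p hp w
    have hE : Dx (rplus r m κ) =ᶠ[nhds p] fun q => Dx r q + κ⁻¹ • Dx m q :=
      Filter.eventuallyEq_of_mem (hU.mem_nhds hp) hRx
    rw [hE.fderiv_eq, HasFDerivAt.fderiv (f := fun q => Dx r q + κ⁻¹ • Dx m q)
      ((diffAt_of_cd hU hrx hp).hasFDerivAt.add
      ((hDxm_diff p hp).hasFDerivAt.const_smul κ⁻¹))]
    simp
  have hD2y : ∀ p ∈ U, ∀ w : ℝ × ℝ,
      fderiv ℝ (Dy (rplus r m κ)) p w
        = fderiv ℝ (Dy r) p w + κ⁻¹ • fderiv ℝ (Dy m) p w := by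
    intro p hp w
    have hE : Dy (rplus r m κ) =ᶠ[nhds p] fun q => Dy r q + κ⁻¹ • Dy m q :=
      Filter.eventuallyEq_of_mem (hU.mem_nhds hp) hRy
    rw [hE.fderiv_eq, HasFDerivAt.fderiv (f := fun q => Dy r q + κ⁻¹ • Dy m q)
      ((diffAt_of_cd hU hry hp).hasFDerivAt.add
      ((hDym_diff p hp).hasFDerivAt.const_smul κ⁻¹))]
    simp
  -- Part 1
  have part1 : ∀ p ∈ U,
      Dx (Dx (rplus r m κ)) p ⬝ᵥ nvec r ω p = 0
      ∧ Dy (Dx (rplus r m κ)) p ⬝ᵥ nvec r ω p = h12 r ω p * Real.sin (ω p)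
      ∧ Dy (Dy (rplus r m κ)) p ⬝ᵥ nvec r ω p = 2 * h22 r ω p * Real.sin (ω p) := by
    intro p hp
    have hc := hconc p hp
    refine ⟨?_, ?_, ?_⟩
    · show fderiv ℝ (Dx (rplus r m κ)) p (1, 0) ⬝ᵥ nvec r ω p = 0
      rw [hD2x p hp (1, 0), add_dotProduct, smul_dotProduct,
        Mx p hp (1, 0), e11 p hp, e21 p hp, smul_eq_mul]
      field_simp
      ring
    · show fderiv ℝ (Dx (rplus r m κ)) p (0, 1) ⬝ᵥ nvec r ω p = h12 r ω p * Real.sin (ω p)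
      rw [hD2x p hp (0, 1), add_dotProduct, smul_dotProduct,
        Mx p hp (0, 1), e12 p hp, e22 p hp, smul_eq_mul]
      field_simp
      linear_combination (-(Real.sin (ω p))) * hc
    · show fderiv ℝ (Dy (rplus r m κ)) p (0, 1) ⬝ᵥ nvec r ω p = 2 * h22 r ω p * Real.sin (ω p)
      rw [hD2y p hp (0, 1), add_dotProduct, smul_dotProduct,
        My p hp (0, 1), e12 p hp, e22 p hp, smul_eq_mul]
      field_simp
      ring
  refine ⟨part1, ?_⟩
  -- Part 2
  intro p hp h12ne
  obtain ⟨k1, k2, k3⟩ := part1 p hp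
  rw [k1, k2, k3]
  have hyx : Dy r p ⬝ᵥ Dx r p = Real.cos (ω p) :=
    (dotProduct_comm _ _).trans (hxy p hp)
  set a := h11 r ω p with ha
  set b := h12 r ω p with hb
  set c2 := h22 r ω p with hc2
  set C := Real.cos (ω p) with hC
  set S := Real.sin (ω p) with hS
  have hSne : S ≠ 0 := hsin p hp
  have hP : a * c2 - b ^ 2 + κ * b = 0 := hconc p hp
  have hpy : S ^ 2 + C ^ 2 = 1 := Real.sin_sq_add_cos_sq _
  have hXx : Dx (rplus r m κ) p = Dx r p + κ⁻¹ • ((b - κ) • Dx r p - a • Dy r p) := by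
    rw [hRx p hp, hmx p hp]
  have hXy : Dy (rplus r m κ) p = Dy r p + κ⁻¹ • (c2 • Dx r p + (κ - b) • Dy r p) := by
    rw [hRy p hp, hmy p hp]
  have Ea : Dx (rplus r m κ) p ⬝ᵥ Dx (rplus r m κ) p
      = (b ^ 2 - 2 * a * b * C + a ^ 2) / κ ^ 2 := by
    rw [hXx]
    simp only [add_dotProduct, dotProduct_add, smul_dotProduct,
      dotProduct_smul, sub_dotProduct, dotProduct_sub, smul_eq_mul,
      hxx p hp, hyy p hp, hxy p hp, hyx]
    field_simp
    ring
  have Eb : Dy (rplus r m κ) p ⬝ᵥ Dy (rplus r m κ) p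
      = (c2 ^ 2 + 2 * c2 * (2 * κ - b) * C + (2 * κ - b) ^ 2) / κ ^ 2 := by
    rw [hXy]
    simp only [add_dotProduct, dotProduct_add, smul_dotProduct,
      dotProduct_smul, sub_dotProduct, dotProduct_sub, smul_eq_mul,
      hxx p hp, hyy p hp, hxy p hp, hyx]
    field_simp
    ring
  have Ec : Dx (rplus r m κ) p ⬝ᵥ Dy (rplus r m κ) p
      = (b * c2 + (b * (2 * κ - b) - a * c2) * C - a * (2 * κ - b)) / κ ^ 2 := by
    rw [hXx, hXy]
    simp only [add_dotProduct, dotProduct_add, smul_dotProduct,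
      dotProduct_smul, sub_dotProduct, dotProduct_sub, smul_eq_mul,
      hxx p hp, hyy p hp, hxy p hp, hyx]
    field_simp
    ring
  rw [Ea, Eb, Ec]
  have hden : (b ^ 2 - 2 * a * b * C + a ^ 2) / κ ^ 2
        * ((c2 ^ 2 + 2 * c2 * (2 * κ - b) * C + (2 * κ - b) ^ 2) / κ ^ 2)
      - ((b * c2 + (b * (2 * κ - b) - a * c2) * C - a * (2 * κ - b)) / κ ^ 2) ^ 2
      = b ^ 2 * S ^ 2 / κ ^ 2 := by
    field_simp
    linear_combination
      S ^ 2 * (3 * κ * b - b ^ 2 + a * c2) * hP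
      - (2 * κ * b - b ^ 2 + a * c2) ^ 2 * hpy
  rw [hden]
  rw [div_eq_iff (div_ne_zero (mul_ne_zero (pow_ne_zero 2 h12ne) (pow_ne_zero 2 hSne))
    (pow_ne_zero 2 hκ))]
  field_simp
  ring
end

section
/- (The oriented angle between the two spherical Chebyshev nets equals π + ω.) In the concordant Chebyshev setting, assume additionally h₁₂ ≠ 0 on U, and set V₁ := n_x − (h₁₁/h₁₂)·n_y and V₂ := −(h₂₂/h₁₂)·n_x + n_y. Then on U: V₁·V₂ = −κ² cos ω and V₁ × V₂ = −κ² sin ω · n. Hence, writing ψ for the oriented angle between V₁ and V₂ (determined by cos ψ = V₁·V₂/κ² and sin ψ · n = (V₁ × V₂)/κ²), one has ψ = π + ω. -/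
open scoped Matrix

/-- The spherical tangent field `V₁ = n_x − (h₁₁/h₁₂)·n_y`. -/
noncomputable def V1 (r : ℝ × ℝ → Fin 3 → ℝ) (ω : ℝ × ℝ → ℝ) (p : ℝ × ℝ) : Fin 3 → ℝ :=
  Dx (nvec r ω) p - (h11 r ω p / h12 r ω p) • Dy (nvec r ω) p

/-- The spherical tangent field `V₂ = −(h₂₂/h₁₂)·n_x + n_y`. -/
noncomputable def V2 (r : ℝ × ℝ → Fin 3 → ℝ) (ω : ℝ × ℝ → ℝ) (p : ℝ × ℝ) : Fin 3 → ℝ :=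
  -(h22 r ω p / h12 r ω p) • Dx (nvec r ω) p + Dy (nvec r ω) p

section Helpers

open Matrix

private lemma dot3 (u v : Fin 3 → ℝ) : u ⬝ᵥ v = u 0 * v 0 + u 1 * v 1 + u 2 * v 2 := by
  simp [dotProduct, Fin.sum_univ_three]

private lemma cross30 (u v : Fin 3 → ℝ) : (u ⨯₃ v) 0 = u 1 * v 2 - u 2 * v 1 := by
  rw [cross_apply]; rfl
private lemma cross31 (u v : Fin 3 → ℝ) : (u ⨯₃ v) 1 = u 2 * v 0 - u 0 * v 2 := by
  rw [cross_apply]; rfl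
private lemma cross32 (u v : Fin 3 → ℝ) : (u ⨯₃ v) 2 = u 0 * v 1 - u 1 * v 0 := by
  rw [cross_apply]; rfl

private lemma cross_norm3 (u v : Fin 3 → ℝ) :
    (u ⨯₃ v) ⬝ᵥ (u ⨯₃ v) = (u ⬝ᵥ u) * (v ⬝ᵥ v) - (u ⬝ᵥ v)^2 := by
  simp only [dot3, cross30, cross31, cross32]; ring

private lemma dot_cross_self_left (u v : Fin 3 → ℝ) : u ⬝ᵥ (u ⨯₃ v) = 0 := by
  simp only [dot3, cross30, cross31, cross32]; ring

private lemma dot_cross_self_right (u v : Fin 3 → ℝ) : v ⬝ᵥ (u ⨯₃ v) = 0 := by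
  simp only [dot3, cross30, cross31, cross32]; ring

private lemma finmk_two {h : 2 < 3} : (⟨2, h⟩ : Fin 3) = 2 := rfl

private lemma decomp3 (u v w : Fin 3 → ℝ) :
    ((u ⬝ᵥ u) * (v ⬝ᵥ v) - (u ⬝ᵥ v)^2) • w =
      ((w ⬝ᵥ u) * (v ⬝ᵥ v) - (w ⬝ᵥ v) * (u ⬝ᵥ v)) • u +
      ((w ⬝ᵥ v) * (u ⬝ᵥ u) - (w ⬝ᵥ u) * (u ⬝ᵥ v)) • v +
      (w ⬝ᵥ (u ⨯₃ v)) • (u ⨯₃ v) := by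
  funext i
  fin_cases i <;>
    simp only [dot3, cross30, cross31, cross32, Pi.add_apply, Pi.smul_apply, smul_eq_mul,
      Fin.zero_eta, Fin.mk_one, finmk_two] <;> ring

private lemma cross_lin_comb (A B C D : ℝ) (u v : Fin 3 → ℝ) :
    (A • u + B • v) ⨯₃ (C • u + D • v) = (A * D - B * C) • (u ⨯₃ v) := by
  funext i
  fin_cases i <;>
    simp only [cross30, cross31, cross32, Pi.add_apply, Pi.smul_apply, smul_eq_mul,
      Fin.zero_eta, Fin.mk_one, finmk_two] <;> ring

private lemma cross_smul₂ (s t : ℝ) (x y : Fin 3 → ℝ) :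
    (s • x) ⨯₃ (t • y) = (s * t) • (x ⨯₃ y) := by
  funext i
  fin_cases i <;>
    simp only [cross30, cross31, cross32, Pi.smul_apply, smul_eq_mul,
      Fin.zero_eta, Fin.mk_one, finmk_two] <;> ring

private lemma diff_comp3 {f : ℝ × ℝ → Fin 3 → ℝ} {p : ℝ × ℝ} (hf : DifferentiableAt ℝ f p)
    (i : Fin 3) : DifferentiableAt ℝ (fun q => f q i) p :=
  ((ContinuousLinearMap.proj i : (Fin 3 → ℝ) →L[ℝ] ℝ).differentiableAt).comp p hf

private lemma fderiv_comp_proj3 {f : ℝ × ℝ → Fin 3 → ℝ} {p : ℝ × ℝ}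
    (hf : DifferentiableAt ℝ f p) (i : Fin 3) (w : ℝ × ℝ) :
    fderiv ℝ (fun q => f q i) p w = fderiv ℝ f p w i := by
  have h : fderiv ℝ (fun q => f q i) p =
      (ContinuousLinearMap.proj i : (Fin 3 → ℝ) →L[ℝ] ℝ).comp (fderiv ℝ f p) := by
    rw [← (ContinuousLinearMap.proj i : (Fin 3 → ℝ) →L[ℝ] ℝ).fderiv (x := f p)]
    exact fderiv_comp p ((ContinuousLinearMap.proj i : (Fin 3 → ℝ) →L[ℝ] ℝ).differentiableAt) hf
  rw [h]; rfl

private lemma fderiv_dot3 {f g : ℝ × ℝ → Fin 3 → ℝ} {p : ℝ × ℝ}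
    (hf : DifferentiableAt ℝ f p) (hg : DifferentiableAt ℝ g p) (w : ℝ × ℝ) :
    fderiv ℝ (fun q => f q ⬝ᵥ g q) p w =
      (fderiv ℝ f p w) ⬝ᵥ g p + f p ⬝ᵥ (fderiv ℝ g p w) := by
  have hfi := fun i => diff_comp3 hf i
  have hgi := fun i => diff_comp3 hg i
  have h1 : fderiv ℝ (fun q => f q ⬝ᵥ g q) p =
      fderiv ℝ (fun q => f q 0 * g q 0 + f q 1 * g q 1 + f q 2 * g q 2) p := by
    congr 1; funext q; exact dot3 _ _
  rw [h1, fderiv_fun_add (by exact ((hfi 0).mul (hgi 0)).add ((hfi 1).mul (hgi 1)))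
      (by exact (hfi 2).mul (hgi 2)),
    fderiv_fun_add (by exact (hfi 0).mul (hgi 0)) (by exact (hfi 1).mul (hgi 1)),
    fderiv_fun_mul (hfi 0) (hgi 0), fderiv_fun_mul (hfi 1) (hgi 1), fderiv_fun_mul (hfi 2) (hgi 2)]
  simp only [ContinuousLinearMap.add_apply, ContinuousLinearMap.smul_apply, smul_eq_mul,
    fderiv_comp_proj3 hf, fderiv_comp_proj3 hg, dot3]
  ring

end Helpers

open Matrix in
/-- **The oriented angle between the two spherical Chebyshev nets equals `π + ω`.**
`V₁·V₂ = −κ² cos ω` and `V₁ × V₂ = −κ² sin ω · n`; hence `ψ := π + ω` satisfies the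
defining relations `cos ψ = V₁·V₂/κ²` and `sin ψ · n = (V₁ × V₂)/κ²` of the oriented
angle between `V₁` and `V₂`. -/
theorem oriented_angle_of_spherical_nets
    (U : Set (ℝ × ℝ)) (hU : IsOpen U) (hUconn : IsConnected U)
    (r : ℝ × ℝ → Fin 3 → ℝ) (hr : ContDiffOn ℝ (⊤ : ℕ∞) r U)
    (ω : ℝ × ℝ → ℝ) (hω : ContDiffOn ℝ (⊤ : ℕ∞) ω U)
    (hω0 : ∀ p ∈ U, 0 < ω p) (hωπ : ∀ p ∈ U, ω p < Real.pi)
    (hxx : ∀ p ∈ U, Dx r p ⬝ᵥ Dx r p = 1)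
    (hyy : ∀ p ∈ U, Dy r p ⬝ᵥ Dy r p = 1)
    (hxy : ∀ p ∈ U, Dx r p ⬝ᵥ Dy r p = Real.cos (ω p))
    (κ : ℝ) (hκ : κ ≠ 0)
    (hconc : ∀ p ∈ U,
      h11 r ω p * h22 r ω p - (h12 r ω p) ^ 2 + κ * h12 r ω p = 0)
    (hh12 : ∀ p ∈ U, h12 r ω p ≠ 0) :
    ∀ p ∈ U,
      (V1 r ω p ⬝ᵥ V2 r ω p = -κ ^ 2 * Real.cos (ω p))
      ∧ (V1 r ω p ⨯₃ V2 r ω p = (-κ ^ 2 * Real.sin (ω p)) • nvec r ω p)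
      ∧ (Real.cos (Real.pi + ω p) = (V1 r ω p ⬝ᵥ V2 r ω p) / κ ^ 2)
      ∧ (Real.sin (Real.pi + ω p) • nvec r ω p = (κ ^ 2)⁻¹ • (V1 r ω p ⨯₃ V2 r ω p)) := by
  -- sine is nonzero on U
  have hsU : ∀ q ∈ U, Real.sin (ω q) ≠ 0 := fun q hq =>
    (Real.sin_pos_of_pos_of_lt_pi (hω0 q hq) (hωπ q hq)).ne'
  -- smoothness infrastructure
  have hfd : ContDiffOn ℝ (⊤ : ℕ∞) (fderiv ℝ r) U := hr.fderiv_of_isOpen hU (by simp)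
  have hDx : ContDiffOn ℝ (⊤ : ℕ∞) (Dx r) U := hfd.clm_apply contDiffOn_const
  have hDy : ContDiffOn ℝ (⊤ : ℕ∞) (Dy r) U := hfd.clm_apply contDiffOn_const
  have hcross : ContDiffOn ℝ (⊤ : ℕ∞) (fun q => Dx r q ⨯₃ Dy r q) U := by
    rw [contDiffOn_pi]
    intro i
    have h1 := fun j => (contDiffOn_pi.mp hDx) j
    have h2 := fun j => (contDiffOn_pi.mp hDy) j
    have he : (fun q => (Dx r q ⨯₃ Dy r q) i) = fun q =>
        ![Dx r q 1 * Dy r q 2 - Dx r q 2 * Dy r q 1,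
          Dx r q 2 * Dy r q 0 - Dx r q 0 * Dy r q 2,
          Dx r q 0 * Dy r q 1 - Dx r q 1 * Dy r q 0] i := by
      funext q; rw [cross_apply]
    rw [he]
    fin_cases i <;> simp only <;>
      exact ((h1 _).mul (h2 _)).sub ((h1 _).mul (h2 _))
  have hsin : ContDiffOn ℝ (⊤ : ℕ∞) (fun q => (Real.sin (ω q))⁻¹) U :=
    (Real.contDiff_sin.comp_contDiffOn hω).inv hsU
  have hn : ContDiffOn ℝ (⊤ : ℕ∞) (nvec r ω) U := hsin.smul hcross
  -- pointwise facts on U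
  have hNu : ∀ q ∈ U, nvec r ω q ⬝ᵥ Dx r q = 0 := by
    intro q hq
    rw [nvec, smul_dotProduct, dotProduct_comm, dot_cross_self_left, smul_eq_mul, mul_zero]
  have hNv : ∀ q ∈ U, nvec r ω q ⬝ᵥ Dy r q = 0 := by
    intro q hq
    rw [nvec, smul_dotProduct, dotProduct_comm, dot_cross_self_right, smul_eq_mul, mul_zero]
  have hcrossnorm : ∀ q ∈ U, (Dx r q ⨯₃ Dy r q) ⬝ᵥ (Dx r q ⨯₃ Dy r q)
      = Real.sin (ω q) ^ 2 := by
    intro q hq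
    rw [cross_norm3, hxx q hq, hyy q hq, hxy q hq, Real.sin_sq]
    ring
  have hNN : ∀ q ∈ U, nvec r ω q ⬝ᵥ nvec r ω q = 1 := by
    intro q hq
    rw [nvec, smul_dotProduct, dotProduct_smul, hcrossnorm q hq, smul_eq_mul, smul_eq_mul]
    field_simp [hsU q hq]
  -- now fix p
  intro p hp
  have hmem := hU.mem_nhds hp
  set s : ℝ := Real.sin (ω p) with hs_def
  set c : ℝ := Real.cos (ω p) with hc_def
  have hs : s ≠ 0 := hsU p hp
  have hs2 : s ^ 2 = 1 - c ^ 2 := by rw [hs_def, hc_def, Real.sin_sq]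
  set u : Fin 3 → ℝ := Dx r p with hu_def
  set v : Fin 3 → ℝ := Dy r p with hv_def
  set N : Fin 3 → ℝ := nvec r ω p with hN_def
  set a : Fin 3 → ℝ := Dx (nvec r ω) p with ha_def
  set b : Fin 3 → ℝ := Dy (nvec r ω) p with hb_def
  set H11 : ℝ := h11 r ω p with hH11_def
  set H12 : ℝ := h12 r ω p with hH12_def
  set H22 : ℝ := h22 r ω p with hH22_def
  -- differentiability at p
  have hnd : DifferentiableAt ℝ (nvec r ω) p :=
    (hn.differentiableOn (by simp)).differentiableAt hmem
  have hDxd : DifferentiableAt ℝ (Dx r) p :=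
    (hDx.differentiableOn (by simp)).differentiableAt hmem
  have hDyd : DifferentiableAt ℝ (Dy r) p :=
    (hDy.differentiableOn (by simp)).differentiableAt hmem
  have hfdd : DifferentiableAt ℝ (fderiv ℝ r) p :=
    (hfd.differentiableOn (by simp)).differentiableAt hmem
  -- Schwarz symmetry
  have hswap : Dx (Dy r) p = Dy (Dx r) p := by
    have hsymm : ∀ w w' : ℝ × ℝ,
        fderiv ℝ (fderiv ℝ r) p w w' = fderiv ℝ (fderiv ℝ r) p w' w := by
      intro w w'
      apply second_derivative_symmetric_of_eventually (f := r)
      · filter_upwards [hmem] with q hq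
        exact ((hr.differentiableOn (by simp)).differentiableAt (hU.mem_nhds hq)).hasFDerivAt
      · exact hfdd.hasFDerivAt
    have e1 : Dx (Dy r) p = fderiv ℝ (fderiv ℝ r) p (1,0) (0,1) := by
      show fderiv ℝ (fun q => fderiv ℝ r q (0,1)) p (1,0) = _
      rw [fderiv_clm_apply hfdd (differentiableAt_const _)]
      simp
    have e2 : Dy (Dx r) p = fderiv ℝ (fderiv ℝ r) p (0,1) (1,0) := by
      show fderiv ℝ (fun q => fderiv ℝ r q (1,0)) p (0,1) = _
      rw [fderiv_clm_apply hfdd (differentiableAt_const _)]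
      simp
    rw [e1, e2, hsymm]
  -- derivatives of the constant dot products
  have derivNN : ∀ w : ℝ × ℝ, (fderiv ℝ (nvec r ω) p w) ⬝ᵥ N + N ⬝ᵥ (fderiv ℝ (nvec r ω) p w) = 0 := by
    intro w
    have h0 : fderiv ℝ (fun q => nvec r ω q ⬝ᵥ nvec r ω q) p = 0 := by
      have heq : (fun q => nvec r ω q ⬝ᵥ nvec r ω q) =ᶠ[nhds p] fun _ => (1:ℝ) :=
        Filter.eventually_of_mem hmem hNN
      rw [heq.fderiv_eq, fderiv_const_apply]
    have := fderiv_dot3 hnd hnd w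
    rw [h0] at this
    simpa using this.symm
  have derivNx : ∀ w : ℝ × ℝ,
      (fderiv ℝ (nvec r ω) p w) ⬝ᵥ u + N ⬝ᵥ (fderiv ℝ (Dx r) p w) = 0 := by
    intro w
    have h0 : fderiv ℝ (fun q => nvec r ω q ⬝ᵥ Dx r q) p = 0 := by
      have heq : (fun q => nvec r ω q ⬝ᵥ Dx r q) =ᶠ[nhds p] fun _ => (0:ℝ) :=
        Filter.eventually_of_mem hmem hNu
      rw [heq.fderiv_eq, fderiv_const_apply]
    have := fderiv_dot3 hnd hDxd w
    rw [h0] at this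
    simpa using this.symm
  have derivNy : ∀ w : ℝ × ℝ,
      (fderiv ℝ (nvec r ω) p w) ⬝ᵥ v + N ⬝ᵥ (fderiv ℝ (Dy r) p w) = 0 := by
    intro w
    have h0 : fderiv ℝ (fun q => nvec r ω q ⬝ᵥ Dy r q) p = 0 := by
      have heq : (fun q => nvec r ω q ⬝ᵥ Dy r q) =ᶠ[nhds p] fun _ => (0:ℝ) :=
        Filter.eventually_of_mem hmem hNv
      rw [heq.fderiv_eq, fderiv_const_apply]
    have := fderiv_dot3 hnd hDyd w
    rw [h0] at this
    simpa using this.symm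
  -- values of second fundamental form
  have hH11v : Dx (Dx r) p ⬝ᵥ N = s * H11 := by
    rw [hH11_def, h11, ← hN_def, ← hs_def]; field_simp
  have hH12v : Dy (Dx r) p ⬝ᵥ N = s * H12 := by
    rw [hH12_def, h12, ← hN_def, ← hs_def]; field_simp
  have hH22v : Dy (Dy r) p ⬝ᵥ N = s * H22 := by
    rw [hH22_def, h22, ← hN_def, ← hs_def]; field_simp
  -- rfl conversions
  have ea : fderiv ℝ (nvec r ω) p (1,0) = a := rfl
  have eb : fderiv ℝ (nvec r ω) p (0,1) = b := rfl
  have exx : fderiv ℝ (Dx r) p (1,0) = Dx (Dx r) p := rfl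
  have exy : fderiv ℝ (Dx r) p (0,1) = Dy (Dx r) p := rfl
  have eyx : fderiv ℝ (Dy r) p (1,0) = Dx (Dy r) p := rfl
  have eyy : fderiv ℝ (Dy r) p (0,1) = Dy (Dy r) p := rfl
  -- dot products of a, b with u, v, N
  have haN : a ⬝ᵥ N = 0 := by
    have h := derivNN (1,0)
    rw [ea, dotProduct_comm N a] at h
    linarith
  have hbN : b ⬝ᵥ N = 0 := by
    have h := derivNN (0,1)
    rw [eb, dotProduct_comm N b] at h
    linarith
  have hau : a ⬝ᵥ u = -(s * H11) := by
    have h := derivNx (1,0)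
    rw [ea, exx, dotProduct_comm N, hH11v] at h
    linarith
  have hbu : b ⬝ᵥ u = -(s * H12) := by
    have h := derivNx (0,1)
    rw [eb, exy, dotProduct_comm N, hH12v] at h
    linarith
  have hav : a ⬝ᵥ v = -(s * H12) := by
    have h := derivNy (1,0)
    rw [ea, eyx, hswap, dotProduct_comm N, hH12v] at h
    linarith
  have hbv : b ⬝ᵥ v = -(s * H22) := by
    have h := derivNy (0,1)
    rw [eb, eyy, dotProduct_comm N, hH22v] at h
    linarith
  -- u ⨯₃ v = s • N
  have hcrossN : u ⨯₃ v = s • N := by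
    rw [hN_def, nvec, smul_smul, mul_inv_cancel₀ hs, one_smul]
  -- decomposition of a and b
  have hGram : (u ⬝ᵥ u) * (v ⬝ᵥ v) - (u ⬝ᵥ v)^2 = s^2 := by
    rw [hxx p hp, hyy p hp, hxy p hp, hs2]; ring
  have hsa : s • a = (c * H12 - H11) • u + (c * H11 - H12) • v := by
    have hd := decomp3 u v a
    rw [hGram, hxx p hp, hyy p hp, hxy p hp, hau, hav, hcrossN] at hd
    have hZ : a ⬝ᵥ (s • N) = 0 := by
      rw [dotProduct_smul, haN, smul_eq_mul, mul_zero]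
    rw [hZ, zero_smul, add_zero] at hd
    have hd2 : s • (s • a) = s • ((c * H12 - H11) • u + (c * H11 - H12) • v) := by
      rw [smul_smul, ← pow_two, hd]
      match_scalars <;> ring
    exact smul_right_injective _ hs hd2
  have hsb : s • b = (c * H22 - H12) • u + (c * H12 - H22) • v := by
    have hd := decomp3 u v b
    rw [hGram, hxx p hp, hyy p hp, hxy p hp, hbu, hbv, hcrossN] at hd
    have hZ : b ⬝ᵥ (s • N) = 0 := by
      rw [dotProduct_smul, hbN, smul_eq_mul, mul_zero]
    rw [hZ, zero_smul, add_zero] at hd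
    have hd2 : s • (s • b) = s • ((c * H22 - H12) • u + (c * H12 - H22) • v) := by
      rw [smul_smul, ← pow_two, hd]
      match_scalars <;> ring
    exact smul_right_injective _ hs hd2
  -- concordance
  have hcp : H11 * H22 - H12 ^ 2 + κ * H12 = 0 := hconc p hp
  have h12p : H12 ≠ 0 := hh12 p hp
  -- the two tangent fields
  have hV1 : s • V1 r ω p = (κ * c) • u + (-κ) • v := by
    have c1 : (c * H12 - H11) - (H11 / H12) * (c * H22 - H12) = κ * c := by
      field_simp
      linear_combination (-c) * hcp
    have c2 : (c * H11 - H12) - (H11 / H12) * (c * H12 - H22) = -κ := by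
      field_simp
      linear_combination hcp
    have e : s • V1 r ω p = s • a - (H11 / H12) • (s • b) := by
      rw [V1, ← ha_def, ← hb_def, ← hH11_def, ← hH12_def]
      match_scalars <;> ring
    rw [e, hsa, hsb, ← c1, ← c2]
    match_scalars <;> ring
  have hV2 : s • V2 r ω p = (-κ) • u + (κ * c) • v := by
    have c1 : -(H22 / H12) * (c * H12 - H11) + (c * H22 - H12) = -κ := by
      field_simp
      linear_combination hcp
    have c2 : -(H22 / H12) * (c * H11 - H12) + (c * H12 - H22) = κ * c := by
      field_simp
      linear_combination (-c) * hcp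
    have e : s • V2 r ω p = -(H22 / H12) • (s • a) + s • b := by
      rw [V2, ← ha_def, ← hb_def, ← hH22_def, ← hH12_def]
      match_scalars <;> ring
    rw [e, hsa, hsb, ← c1, ← c2]
    match_scalars <;> ring
  -- main dot product identity
  have hdot : V1 r ω p ⬝ᵥ V2 r ω p = -κ ^ 2 * c := by
    have h1 : (s • V1 r ω p) ⬝ᵥ (s • V2 r ω p) = s * s * (V1 r ω p ⬝ᵥ V2 r ω p) := by
      rw [smul_dotProduct, dotProduct_smul, smul_eq_mul, smul_eq_mul]; ring
    have h2 : (s • V1 r ω p) ⬝ᵥ (s • V2 r ω p) = s * s * (-κ ^ 2 * c) := by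
      rw [hV1, hV2]
      simp only [add_dotProduct, dotProduct_add, smul_dotProduct, dotProduct_smul,
        smul_eq_mul, hxx p hp, hyy p hp, hxy p hp, dotProduct_comm v u]
      rw [hu_def, hv_def, hxx p hp, hyy p hp, hxy p hp, ← hc_def]
      linear_combination (κ^2*c) * hs2
    have h3 := h1.symm.trans h2
    exact mul_left_cancel₀ (mul_ne_zero hs hs) h3
  -- main cross product identity
  have hcrossV : V1 r ω p ⨯₃ V2 r ω p = (-κ ^ 2 * s) • N := by
    have h1 : (s • V1 r ω p) ⨯₃ (s • V2 r ω p) = (s * s) • (V1 r ω p ⨯₃ V2 r ω p) :=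
      cross_smul₂ s s _ _
    have h2 : (s • V1 r ω p) ⨯₃ (s • V2 r ω p) = (s * s) • ((-κ ^ 2 * s) • N) := by
      rw [hV1, hV2, cross_lin_comb, hcrossN]
      match_scalars
      linear_combination (κ^2*s) * hs2
    have h3 := h1.symm.trans h2
    exact smul_right_injective _ (mul_ne_zero hs hs) h3
  refine ⟨hdot, by rw [hcrossV], ?_, ?_⟩
  · rw [hdot, Real.cos_add, Real.cos_pi, Real.sin_pi, ← hc_def]
    field_simp
    ring
  · rw [hcrossV, Real.sin_add, Real.sin_pi, Real.cos_pi]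
    match_scalars
    field_simp
    ring
end

section
/- (Derivative of the normal along the two families: the invariant relation cot ω_III + cot ω = 2Hσ/K in geometric form.) Let U ⊆ ℝ² be open, and let r, n : ℝ² → ℝ³ be C^∞ on U with n·n = 1, n·r_x = 0, n·r_y = 0, I₁₁ := r_x·r_x > 0, I₂₂ := r_y·r_y > 0 and Δ := I₁₁I₂₂ − I₁₂² > 0 on U, where I₁₂ := r_x·r_y. Define IIᵢⱼ as the second partial derivatives of r dotted with n (II₁₁ = r_xx·n, II₁₂ = r_xy·n, II₂₂ = r_yy·n), and set K := (II₁₁II₂₂ − II₁₂²)/Δ, H := (I₁₁II₂₂ − 2I₁₂II₁₂ + I₂₂II₁₁)/(2Δ), σ := II₁₂/√Δ, cos ω := I₁₂/√(I₁₁I₂₂), sin ω := √(Δ/(I₁₁I₂₂)). Then on U: n_x·n_y = (2Hσ sin ω − K cos ω)·√(I₁₁I₂₂). Equivalently, for the unit representatives X̂ᵢ of the coordinate direction pair, X̂₁n·X̂₂n = 2Hσ sin ω − K cos ω = K sin ω · cot ω_III, where ω_III is the intersection angle of the spherical image of the net, so cot ω_III = 2Hσ/K − cot ω wherever K ≠ 0.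 -/
open scoped Matrix

noncomputable def I11 (r : ℝ × ℝ → Fin 3 → ℝ) (p : ℝ × ℝ) : ℝ := Dx r p ⬝ᵥ Dx r p
noncomputable def I12 (r : ℝ × ℝ → Fin 3 → ℝ) (p : ℝ × ℝ) : ℝ := Dx r p ⬝ᵥ Dy r p
noncomputable def I22 (r : ℝ × ℝ → Fin 3 → ℝ) (p : ℝ × ℝ) : ℝ := Dy r p ⬝ᵥ Dy r p
noncomputable def Δdet (r : ℝ × ℝ → Fin 3 → ℝ) (p : ℝ × ℝ) : ℝ :=
  I11 r p * I22 r p - (I12 r p) ^ 2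

noncomputable def II11 (r n : ℝ × ℝ → Fin 3 → ℝ) (p : ℝ × ℝ) : ℝ := Dx (Dx r) p ⬝ᵥ n p
noncomputable def II12 (r n : ℝ × ℝ → Fin 3 → ℝ) (p : ℝ × ℝ) : ℝ := Dy (Dx r) p ⬝ᵥ n p
noncomputable def II22 (r n : ℝ × ℝ → Fin 3 → ℝ) (p : ℝ × ℝ) : ℝ := Dy (Dy r) p ⬝ᵥ n p

/-- Gauss curvature. -/
noncomputable def Kc (r n : ℝ × ℝ → Fin 3 → ℝ) (p : ℝ × ℝ) : ℝ :=
  (II11 r n p * II22 r n p - (II12 r n p) ^ 2) / Δdet r p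

/-- Mean curvature. -/
noncomputable def Hc (r n : ℝ × ℝ → Fin 3 → ℝ) (p : ℝ × ℝ) : ℝ :=
  (I11 r p * II22 r n p - 2 * I12 r p * II12 r n p + I22 r p * II11 r n p)
    / (2 * Δdet r p)

/-- Schief curvature. -/
noncomputable def σc (r n : ℝ × ℝ → Fin 3 → ℝ) (p : ℝ × ℝ) : ℝ :=
  II12 r n p / Real.sqrt (Δdet r p)

noncomputable def cosω (r : ℝ × ℝ → Fin 3 → ℝ) (p : ℝ × ℝ) : ℝ :=
  I12 r p / Real.sqrt (I11 r p * I22 r p)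

noncomputable def sinω (r : ℝ × ℝ → Fin 3 → ℝ) (p : ℝ × ℝ) : ℝ :=
  Real.sqrt (Δdet r p / (I11 r p * I22 r p))


section Aux
open Matrix

lemma fderiv_dot_apply (f g : ℝ × ℝ → Fin 3 → ℝ) (p v : ℝ × ℝ)
    (hf : DifferentiableAt ℝ f p) (hg : DifferentiableAt ℝ g p) :
    fderiv ℝ (fun q => f q ⬝ᵥ g q) p v
      = fderiv ℝ f p v ⬝ᵥ g p + f p ⬝ᵥ fderiv ℝ g p v := by
  have hfi : ∀ i : Fin 3, HasFDerivAt (fun q => f q i)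
      ((ContinuousLinearMap.proj i).comp (fderiv ℝ f p)) p := fun i => by
    exact
      (ContinuousLinearMap.proj i).hasFDerivAt.comp p hf.hasFDerivAt
  have hgi : ∀ i : Fin 3, HasFDerivAt (fun q => g q i)
      ((ContinuousLinearMap.proj i).comp (fderiv ℝ g p)) p := fun i => by
    exact
      (ContinuousLinearMap.proj i).hasFDerivAt.comp p hg.hasFDerivAt
  have h : HasFDerivAt (fun q => f q ⬝ᵥ g q)
      (∑ i : Fin 3, (f p i • ((ContinuousLinearMap.proj i).comp (fderiv ℝ g p))
        + g p i • ((ContinuousLinearMap.proj i).comp (fderiv ℝ f p)))) p := by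
    have := HasFDerivAt.fun_sum (fun i (_ : i ∈ Finset.univ) => (hfi i).mul (hgi i))
    simpa [dotProduct] using this
  rw [h.fderiv]
  simp [dotProduct, Finset.sum_add_distrib, mul_comm]
  ring

lemma contDiffAt_dir (f : ℝ × ℝ → Fin 3 → ℝ) (p : ℝ × ℝ) (v : ℝ × ℝ)
    (hf : ContDiffAt ℝ (⊤ : ℕ∞) f p) :
    ContDiffAt ℝ (⊤ : ℕ∞) (fun q => fderiv ℝ f q v) p := by
  have h1 : ContDiffAt ℝ (⊤ : ℕ∞) (fderiv ℝ f) p := hf.fderiv_right (by simp)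
  exact (ContinuousLinearMap.apply ℝ (Fin 3 → ℝ) v).contDiff.comp_contDiffAt p h1

lemma symm_mixed (f : ℝ × ℝ → Fin 3 → ℝ) (p : ℝ × ℝ)
    (hf : ContDiffAt ℝ (⊤ : ℕ∞) f p) : Dx (Dy f) p = Dy (Dx f) p := by
  have hsym : IsSymmSndFDerivAt ℝ f p := hf.isSymmSndFDerivAt (by rw [minSmoothness_of_isRCLikeNormedField]; exact WithTop.coe_le_coe.mpr (le_top : (2 : ℕ∞) ≤ ⊤))
  have h1 : ContDiffAt ℝ (⊤ : ℕ∞) (fderiv ℝ f) p := hf.fderiv_right (by simp)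
  have hd : DifferentiableAt ℝ (fderiv ℝ f) p := h1.differentiableAt (by simp)
  have key : ∀ v w : ℝ × ℝ, fderiv ℝ (fun q => fderiv ℝ f q v) p w
      = fderiv ℝ (fderiv ℝ f) p w v := by
    intro v w
    rw [fderiv_clm_apply hd (differentiableAt_const v)]
    simp
  show fderiv ℝ (fun q => fderiv ℝ f q (0,1)) p (1,0)
      = fderiv ℝ (fun q => fderiv ℝ f q (1,0)) p (0,1)
  rw [key, key, hsym]

lemma orth_zero (a b ν x : Fin 3 → ℝ)
    (hD : a ⬝ᵥ a * (b ⬝ᵥ b) - (a ⬝ᵥ b) ^ 2 ≠ 0)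
    (hν : ν ⬝ᵥ ν = 1) (hνa : ν ⬝ᵥ a = 0) (hνb : ν ⬝ᵥ b = 0)
    (hxa : a ⬝ᵥ x = 0) (hxb : b ⬝ᵥ x = 0) (hxν : ν ⬝ᵥ x = 0) : x = 0 := by
  set M : Matrix (Fin 3) (Fin 3) ℝ := Matrix.of ![a, b, ν] with hM
  have hdet : M.det * M.det ≠ 0 := by
    have h1 : M.det * M.det = (M * Mᵀ).det := by
      rw [Matrix.det_mul, Matrix.det_transpose]
    have h2 : (M * Mᵀ).det = a ⬝ᵥ a * (b ⬝ᵥ b) - (a ⬝ᵥ b) ^ 2 := by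
      have e : ∀ i j : Fin 3, (M * Mᵀ) i j = M i ⬝ᵥ M j := by
        intro i j; simp [Matrix.mul_apply, dotProduct, Matrix.transpose]
      have hM0 : M 0 = a := rfl
      have hM1 : M 1 = b := rfl
      have hM2 : M 2 = ν := rfl
      have hab : b ⬝ᵥ a = a ⬝ᵥ b := dotProduct_comm _ _
      have haν : a ⬝ᵥ ν = 0 := by rw [dotProduct_comm]; exact hνa
      have hbν : b ⬝ᵥ ν = 0 := by rw [dotProduct_comm]; exact hνb
      rw [Matrix.det_fin_three]
      simp only [e, hM0, hM1, hM2, hab, haν, hbν, hν, hνa, hνb]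
      ring
    rw [h1, h2]; exact hD
  have hunit : IsUnit M.det := isUnit_iff_ne_zero.2 (fun h => hdet (by simp [h]))
  have hMx : M *ᵥ x = 0 := by
    funext i
    fin_cases i <;> simp [hM, Matrix.mulVec, hxa, hxb, hxν]
  have := congrArg (fun y => M⁻¹ *ᵥ y) hMx
  simpa [Matrix.mulVec_mulVec, Matrix.nonsing_inv_mul M hunit] using this

end Aux

/-- **Derivative of the normal along the two families: the invariant relation
`cot ω_III + cot ω = 2Hσ/K` in geometric form.** On `U`,
`n_x·n_y = (2Hσ sin ω − K cos ω)·√(I₁₁I₂₂)`; equivalently, for the unit representatives,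
`X̂₁n·X̂₂n = 2Hσ sin ω − K cos ω`, and wherever `K ≠ 0` the angle `ω_III` of the spherical
image, determined by `X̂₁n·X̂₂n = K sin ω · cot ω_III`, satisfies
`cot ω_III = 2Hσ/K − cot ω`. -/
theorem normal_derivative_relation
    (U : Set (ℝ × ℝ)) (hU : IsOpen U)
    (r n : ℝ × ℝ → Fin 3 → ℝ)
    (hr : ContDiffOn ℝ (⊤ : ℕ∞) r U) (hn : ContDiffOn ℝ (⊤ : ℕ∞) n U)
    (hnunit : ∀ p ∈ U, n p ⬝ᵥ n p = 1)
    (hnx : ∀ p ∈ U, n p ⬝ᵥ Dx r p = 0) (hny : ∀ p ∈ U, n p ⬝ᵥ Dy r p = 0)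
    (h11 : ∀ p ∈ U, 0 < I11 r p) (h22 : ∀ p ∈ U, 0 < I22 r p)
    (hΔ : ∀ p ∈ U, 0 < Δdet r p) :
    ∀ p ∈ U,
      (Dx n p ⬝ᵥ Dy n p
        = (2 * Hc r n p * σc r n p * sinω r p - Kc r n p * cosω r p)
            * Real.sqrt (I11 r p * I22 r p))
      ∧ (((Real.sqrt (I11 r p))⁻¹ • Dx n p) ⬝ᵥ ((Real.sqrt (I22 r p))⁻¹ • Dy n p)
        = 2 * Hc r n p * σc r n p * sinω r p - Kc r n p * cosω r p)
      ∧ (Kc r n p ≠ 0 → ∀ cotωIII : ℝ,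
          ((Real.sqrt (I11 r p))⁻¹ • Dx n p) ⬝ᵥ ((Real.sqrt (I22 r p))⁻¹ • Dy n p)
            = Kc r n p * sinω r p * cotωIII →
          cotωIII = 2 * Hc r n p * σc r n p / Kc r n p
              - cosω r p / sinω r p) := by
  intro p hp
  have hrp : ContDiffAt ℝ (⊤ : ℕ∞) r p := hr.contDiffAt (hU.mem_nhds hp)
  have hnp : ContDiffAt ℝ (⊤ : ℕ∞) n p := hn.contDiffAt (hU.mem_nhds hp)
  have hnd : DifferentiableAt ℝ n p := hnp.differentiableAt (by simp)
  have hDxr : DifferentiableAt ℝ (Dx r) p :=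
    (contDiffAt_dir r p (1,0) hrp).differentiableAt (by simp)
  have hDyr : DifferentiableAt ℝ (Dy r) p :=
    (contDiffAt_dir r p (0,1) hrp).differentiableAt (by simp)
  have hderiv0 : ∀ (F : ℝ × ℝ → ℝ) (c : ℝ), (∀ q ∈ U, F q = c) → fderiv ℝ F p = 0 := by
    intro F c h
    have he : F =ᶠ[nhds p] (fun _ => c) := Filter.eventuallyEq_of_mem (hU.mem_nhds hp) h
    rw [he.fderiv_eq]
    exact fderiv_const_apply c
  -- differentiated orthogonality relations
  have f1 : Dx r p ⬝ᵥ Dx n p = -(II11 r n p) := by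
    have h0 : fderiv ℝ (fun q => n q ⬝ᵥ Dx r q) p = 0 := hderiv0 _ 0 hnx
    have h1 := fderiv_dot_apply n (Dx r) p (1,0) hnd hDxr
    rw [h0] at h1
    have h2 : (0:ℝ) = Dx n p ⬝ᵥ Dx r p + n p ⬝ᵥ Dx (Dx r) p := by simp at h1; exact h1
    rw [dotProduct_comm]
    simp only [II11]
    rw [dotProduct_comm (Dx (Dx r) p)]
    linarith
  have f2 : Dx r p ⬝ᵥ Dy n p = -(II12 r n p) := by
    have h0 : fderiv ℝ (fun q => n q ⬝ᵥ Dx r q) p = 0 := hderiv0 _ 0 hnx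
    have h1 := fderiv_dot_apply n (Dx r) p (0,1) hnd hDxr
    rw [h0] at h1
    have h2 : (0:ℝ) = Dy n p ⬝ᵥ Dx r p + n p ⬝ᵥ Dy (Dx r) p := by simp at h1; exact h1
    rw [dotProduct_comm]
    simp only [II12]
    rw [dotProduct_comm (Dy (Dx r) p)]
    linarith
  have f3 : Dy r p ⬝ᵥ Dx n p = -(II12 r n p) := by
    have h0 : fderiv ℝ (fun q => n q ⬝ᵥ Dy r q) p = 0 := hderiv0 _ 0 hny
    have h1 := fderiv_dot_apply n (Dy r) p (1,0) hnd hDyr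
    rw [h0] at h1
    have h2 : (0:ℝ) = Dx n p ⬝ᵥ Dy r p + n p ⬝ᵥ Dx (Dy r) p := by simp at h1; exact h1
    rw [symm_mixed r p hrp] at h2
    rw [dotProduct_comm]
    simp only [II12]
    rw [dotProduct_comm (Dy (Dx r) p)]
    linarith
  have f4 : Dy r p ⬝ᵥ Dy n p = -(II22 r n p) := by
    have h0 : fderiv ℝ (fun q => n q ⬝ᵥ Dy r q) p = 0 := hderiv0 _ 0 hny
    have h1 := fderiv_dot_apply n (Dy r) p (0,1) hnd hDyr
    rw [h0] at h1
    have h2 : (0:ℝ) = Dy n p ⬝ᵥ Dy r p + n p ⬝ᵥ Dy (Dy r) p := by simp at h1; exact h1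
    rw [dotProduct_comm]
    simp only [II22]
    rw [dotProduct_comm (Dy (Dy r) p)]
    linarith
  have f5 : n p ⬝ᵥ Dx n p = 0 := by
    have h0 : fderiv ℝ (fun q => n q ⬝ᵥ n q) p = 0 := hderiv0 _ 1 hnunit
    have h1 := fderiv_dot_apply n n p (1,0) hnd hnd
    rw [h0] at h1
    have h2 : (0:ℝ) = Dx n p ⬝ᵥ n p + n p ⬝ᵥ Dx n p := by simp at h1; exact h1
    rw [dotProduct_comm (Dx n p)] at h2
    linarith
  have f6 : n p ⬝ᵥ Dy n p = 0 := by
    have h0 : fderiv ℝ (fun q => n q ⬝ᵥ n q) p = 0 := hderiv0 _ 1 hnunit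
    have h1 := fderiv_dot_apply n n p (0,1) hnd hnd
    rw [h0] at h1
    have h2 : (0:ℝ) = Dy n p ⬝ᵥ n p + n p ⬝ᵥ Dy n p := by simp at h1; exact h1
    rw [dotProduct_comm (Dy n p)] at h2
    linarith
  -- abbreviations
  have hE : 0 < I11 r p := h11 p hp
  have hG : 0 < I22 r p := h22 p hp
  have hD : 0 < Δdet r p := hΔ p hp
  have hDne : Δdet r p ≠ 0 := ne_of_gt hD
  have hgaa : Dx r p ⬝ᵥ Dx r p = I11 r p := rfl
  have hgab : Dx r p ⬝ᵥ Dy r p = I12 r p := rfl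
  have hgba : Dy r p ⬝ᵥ Dx r p = I12 r p := dotProduct_comm _ _
  have hgbb : Dy r p ⬝ᵥ Dy r p = I22 r p := rfl
  set E := I11 r p
  set F := I12 r p
  set G := I22 r p
  set L := II11 r n p
  set M := II12 r n p
  set N := II22 r n p
  set D := Δdet r p with hDdef
  have hDeq : D = E * G - F ^ 2 := rfl
  set c1 : ℝ := (F * N - G * M) / D with hc1
  set c2 : ℝ := (F * M - E * N) / D with hc2
  -- decomposition of Dy n p in the tangent plane
  have hdecomp : Dy n p = c1 • Dx r p + c2 • Dy r p := by
    have hz := orth_zero (Dx r p) (Dy r p) (n p)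
      (Dy n p - (c1 • Dx r p + c2 • Dy r p))
      (by rw [hgaa, hgbb, hgab]; rw [hDeq] at hDne; exact hDne)
      (hnunit p hp) (hnx p hp) (hny p hp)
      ?_ ?_ ?_
    · exact sub_eq_zero.mp hz
    · simp only [dotProduct_sub, dotProduct_add, dotProduct_smul,
        smul_eq_mul, hgaa, hgab, f2]
      have hne : E * G - F ^ 2 ≠ 0 := by rw [← hDeq]; exact hDne
      rw [hc1, hc2, hDeq]
      field_simp
      have hX : -F ^ 2 + G * E ≠ 0 := by contrapose! hne; linarith
      linear_combination M * mul_inv_cancel₀ hX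
    · simp only [dotProduct_sub, dotProduct_add, dotProduct_smul,
        smul_eq_mul, hgba, hgbb, f4]
      have hne : E * G - F ^ 2 ≠ 0 := by rw [← hDeq]; exact hDne
      rw [hc1, hc2, hDeq]
      field_simp
      have hX : -F ^ 2 + G * E ≠ 0 := by contrapose! hne; linarith
      linear_combination N * mul_inv_cancel₀ hX
    · simp only [dotProduct_sub, dotProduct_add, dotProduct_smul,
        smul_eq_mul, hnx p hp, hny p hp, f6]
      ring
  -- the key scalar identity
  have key : Dx n p ⬝ᵥ Dy n p = c1 * (-L) + c2 * (-M) := by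
    rw [hdecomp, dotProduct_add, dotProduct_smul, dotProduct_smul,
      smul_eq_mul, smul_eq_mul, dotProduct_comm (Dx n p) (Dx r p),
      dotProduct_comm (Dx n p) (Dy r p), f1, f3]
  -- square root facts
  have hsD : (0:ℝ) < Real.sqrt D := Real.sqrt_pos.mpr hD
  have hsEG : (0:ℝ) < Real.sqrt (E * G) := Real.sqrt_pos.mpr (mul_pos hE hG)
  have hsDsq : Real.sqrt D * Real.sqrt D = D := Real.mul_self_sqrt hD.le
  have hsin : sinω r p = Real.sqrt D / Real.sqrt (E * G) := by
    rw [sinω, Real.sqrt_div hD.le]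
  have hsin_pos : 0 < sinω r p := by
    rw [hsin]; positivity
  have hσs : σc r n p * sinω r p * Real.sqrt (E * G) = M := by
    rw [σc, hsin]
    field_simp
    exact mul_div_cancel_right₀ _ hsD.ne'
  have hcos : cosω r p * Real.sqrt (E * G) = F := by
    rw [cosω]
    field_simp
    exact mul_div_cancel_right₀ _ hsEG.ne'
  have hKval : Kc r n p = (L * N - M ^ 2) / D := rfl
  have hHval : Hc r n p = (E * N - 2 * F * M + G * L) / (2 * D) := rfl
  -- first statement
  have goal1 : Dx n p ⬝ᵥ Dy n p
      = (2 * Hc r n p * σc r n p * sinω r p - Kc r n p * cosω r p)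
          * Real.sqrt (E * G) := by
    have expand : (2 * Hc r n p * σc r n p * sinω r p - Kc r n p * cosω r p)
        * Real.sqrt (E * G)
        = 2 * Hc r n p * (σc r n p * sinω r p * Real.sqrt (E * G))
          - Kc r n p * (cosω r p * Real.sqrt (E * G)) := by ring
    rw [expand, hσs, hcos, key, hKval, hHval, hc1, hc2]
    field_simp
    ring
  have hs1 : (0:ℝ) < Real.sqrt E := Real.sqrt_pos.mpr hE
  have hs2 : (0:ℝ) < Real.sqrt G := Real.sqrt_pos.mpr hG
  have hmulsqrt : Real.sqrt E * Real.sqrt G = Real.sqrt (E * G) :=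
    (Real.sqrt_mul hE.le G).symm
  have goal2 : ((Real.sqrt E)⁻¹ • Dx n p) ⬝ᵥ ((Real.sqrt G)⁻¹ • Dy n p)
      = 2 * Hc r n p * σc r n p * sinω r p - Kc r n p * cosω r p := by
    rw [smul_dotProduct, dotProduct_smul, smul_eq_mul, smul_eq_mul,
      goal1, ← hmulsqrt]
    field_simp
  refine ⟨goal1, goal2, ?_⟩
  intro hK cot hcot
  rw [goal2] at hcot
  have hsinne : sinω r p ≠ 0 := ne_of_gt hsin_pos
  field_simp
  linear_combination -hcot
end
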